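/- Let K be a field of characteristic ≠ 2 and F/K a quadratic extension, F = K[ξ] with ξ^2 = −pξ − q. Define n: F^× × F^× → Λ^2_Q(K^× ⊗ Q) by: n(a,b) = 2(a ∧ b) if a,b ∈ K^×; n(a,b) = a ∧ N(b) if a ∈ K^×, b ∉ K; n(a,b) = N(a) ∧ b if b ∈ K^×, a ∉ K; n(a,b) = (a/b) ∧ N(b) if a,b ∉ K and a/b ∈ K; and n(a,b) = 2(a1 ∧ b1) − (N(a)/a1^2) ∧ (b0 − b1 a0/a1) − (a0 − a1 b0/b1) ∧ (N(b)/b1^2) otherwise. Then n is antisymmetric: n(a,b) = −n(b,a) for all a, b ∈ F^×. -/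

import Mathlib

set_option synthInstance.maxHeartbeats 400000
set_option maxHeartbeats 1000000

open scoped TensorProduct Classical
open Polynomial

/-- `K^× ⊗_ℤ ℚ` as a `ℚ`-vector space. -/
noncomputable abbrev MUQ (F : Type*) [Field F] := ℚ ⊗[ℤ] Additive Fˣ

/-- The image of a nonzero `f ∈ F^×` in `F^× ⊗ ℚ`, inside the exterior algebra. -/
noncomputable def wE {F : Type*} [Field F] (f : F) : ExteriorAlgebra ℚ (MUQ F) :=
  if h : f ≠ 0 then ExteriorAlgebra.ι ℚ ((1 : ℚ) ⊗ₜ[ℤ] Additive.ofMul (Units.mk0 f h)) else 0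

/-- The wedge `f ∧ g ∈ Λ²_ℚ(F^× ⊗ ℚ)`. -/
noncomputable def wedge {F : Type*} [Field F] (f g : F) : ExteriorAlgebra ℚ (MUQ F) :=
  wE f * wE g

/-- The norm form of the quadratic extension `F = K[ξ]`, `ξ² = −pξ − q`:
`N(x0 + x1 ξ) = x0² − p x0 x1 + q x1²`. -/
def Nrm {K : Type*} [Field K] (p q x0 x1 : K) : K := x0 ^ 2 - p * x0 * x1 + q * x1 ^ 2

/-- The case-by-case map `n = n_{F/K,2}[2] : F^× × F^× → Λ²_ℚ(K^× ⊗ ℚ)` of the paper,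
with an element `a ∈ F` written in components `a = a0 + a1 ξ`; `a ∈ K` iff `a1 = 0`. -/
noncomputable def nmap {K : Type*} [Field K] (p q a0 a1 b0 b1 : K) :
    ExteriorAlgebra ℚ (MUQ K) :=
  if a1 = 0 ∧ b1 = 0 then (2 : ℚ) • wedge a0 b0
  else if a1 = 0 then wedge a0 (Nrm p q b0 b1)
  else if b1 = 0 then wedge (Nrm p q a0 a1) b0
  else if a0 * b1 = a1 * b0 then wedge (a1 / b1) (Nrm p q b0 b1)
  else (2 : ℚ) • wedge a1 b1
    - wedge (Nrm p q a0 a1 / a1 ^ 2) (b0 - b1 * a0 / a1)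
    - wedge (a0 - a1 * b0 / b1) (Nrm p q b0 b1 / b1 ^ 2)

/-! Each case of `n` is a combination of wedges, so antisymmetry reduces to that of `∧`, except
when `a` and `b` are `K`-proportional. There `a = c b` with `c ∈ K^×`, so `N(a) = c² N(b)`, and
`c ∧ c² N(b) = c ∧ N(b)` because `c ∧ c = 0`. -/

section Wedge

variable {F : Type*} [Field F]

lemma wedge_anticomm (f g : F) : wedge f g = -wedge g f := by
  unfold wedge wE
  split_ifs
  · exact eq_neg_of_add_eq_zero_left (ExteriorAlgebra.ι_add_mul_swap _ _)
  all_goals simp only [mul_zero, zero_mul, neg_zero]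

lemma wE_mul_self (f : F) : wE f * wE f = 0 := by
  unfold wE
  split_ifs <;> simp

lemma wE_mul {f g : F} (hf : f ≠ 0) (hg : g ≠ 0) :
    wE (f * g) = wE f + wE g := by
  simp only [wE, dif_pos (mul_ne_zero hf hg), dif_pos hf, dif_pos hg, Units.mk0_mul,
    ofMul_mul, TensorProduct.tmul_add, map_add]

lemma wE_one : wE (1 : F) = 0 := by
  simp [wE]

lemma wE_inv {f : F} (hf : f ≠ 0) : wE f⁻¹ = -wE f := by
  have h := wE_mul hf (inv_ne_zero hf)
  rw [mul_inv_cancel₀ hf, wE_one] at h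
  exact eq_neg_of_add_eq_zero_right h.symm

lemma wedge_inv_left {c : F} (hc : c ≠ 0) (x : F) :
    wedge c⁻¹ x = -wedge c x := by
  rw [wedge, wedge, wE_inv hc, neg_mul]

lemma wedge_sq_mul_right {c : F} (hc : c ≠ 0) (x : F) :
    wedge c (c ^ 2 * x) = wedge c x := by
  rcases eq_or_ne x 0 with rfl | hx
  · rw [mul_zero]
  · rw [wedge, wedge, wE_mul (pow_ne_zero 2 hc) hx, sq, wE_mul hc hc, mul_add, mul_add,
      wE_mul_self, zero_add, zero_add]

end Wedge

lemma Nrm_mul {K : Type*} [Field K] (p q c x0 x1 : K) :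
    Nrm p q (c * x0) (c * x1) = c ^ 2 * Nrm p q x0 x1 := by
  unfold Nrm; ring

lemma wedge_div_Nrm_of_proportional {K : Type*} [Field K] (p q : K) {a0 a1 b0 b1 : K}
    (ha1 : a1 ≠ 0) (hb1 : b1 ≠ 0) (hab : a0 * b1 = a1 * b0) :
    wedge (a1 / b1) (Nrm p q b0 b1) = -wedge (b1 / a1) (Nrm p q a0 a1) := by
  obtain ⟨c, hc, rfl, rfl⟩ : ∃ c ≠ 0, a0 = c * b0 ∧ a1 = c * b1 :=
    ⟨a1 / b1, div_ne_zero ha1 hb1, by field_simp; linear_combination hab, by field_simp⟩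
  rw [mul_div_cancel_right₀ c hb1, div_mul_cancel_right₀ hb1, Nrm_mul, wedge_inv_left hc, neg_neg,
    wedge_sq_mul_right hc]

theorem stmt11_general (K : Type*) [Field K] (p q : K)
    (a0 a1 b0 b1 : K) :
    nmap p q a0 a1 b0 b1 = -nmap p q b0 b1 a0 a1 := by
  rcases eq_or_ne a1 0 with ha1 | ha1 <;> rcases eq_or_ne b1 0 with hb1 | hb1
  · simp only [nmap, ha1, hb1, and_self, if_true, wedge_anticomm b0 a0, smul_neg, neg_neg]
  · simp only [nmap, ha1, hb1, and_false, if_true, if_false]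
    exact wedge_anticomm _ _
  · simp only [nmap, ha1, hb1, and_false, if_true, if_false]
    exact wedge_anticomm _ _
  · have hswap : b0 * a1 = b1 * a0 ↔ a0 * b1 = a1 * b0 := by
      rw [mul_comm b0, mul_comm b1, eq_comm]
    simp only [nmap, ha1, hb1, and_false, if_false, hswap]
    split_ifs with hab
    · exact wedge_div_Nrm_of_proportional p q ha1 hb1 hab
    · rw [wedge_anticomm b1 a1, wedge_anticomm (Nrm p q b0 b1 / b1 ^ 2),
        wedge_anticomm (b0 - b1 * a0 / a1)]
      module

/-- `char K ≠ 2`, `F = K[ξ]` a quadratic extension with `ξ² = −pξ − q`.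
The case-defined map `n : F^× × F^× → Λ²_ℚ(K^× ⊗ ℚ)` is antisymmetric:
`n(a,b) = −n(b,a)` for all `a, b ∈ F^×`. -/
theorem stmt11 (K : Type*) [Field K] (hchar : (2 : K) ≠ 0) (p q : K)
    (hirr : Irreducible (X ^ 2 + C p * X + C q : K[X]))
    (a0 a1 b0 b1 : K) (ha : ¬(a0 = 0 ∧ a1 = 0)) (hb : ¬(b0 = 0 ∧ b1 = 0)) :
    nmap p q a0 a1 b0 b1 = -nmap p q b0 b1 a0 a1 :=
  stmt11_general K p q a0 a1 b0 b1
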